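/- Violation of Rule 2b: Let P ⊆ A be a simultaneous Hall set. Then no edge (u,v) with u ∈ S \ (T ∪ P) and v ∈ N(P) \ N(P^T) can belong to a simultaneous matching of G. -/

import Mathlib

/-!
Fix a simultaneous matching `M` and split `P` into `P ∩ S` and `P \ S ⊆ T`. Each part is matched
injectively by `M`, so `|P| = |N_M(P)| + |N_M(P ∩ S) ∩ N_M(P \ S)|`, and a vertex matched both from
`P ∩ S` and from `P \ S` must come from `P^S` (the `T`-matching forbids a second partner in `T`),
so the intersection lies in `N(P^S) ∩ N(P^T)`. The Hall equation then forces `N_M(P) = N(P)`: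
every vertex of `N(P)` is matched into `P`. The partner of `v` cannot lie in `S`, since `u ∉ P`
already takes `v` in the `S`-matching, and it cannot lie in `T \ S`, since `v ∉ N(P^T)`.
-/

open Finset

variable {V W : Type*} [DecidableEq V] [DecidableEq W]

def nbhd (E : Finset (V × W)) (P : Finset V) : Finset W :=
  (E.filter (fun e => e.1 ∈ P)).image Prod.snd

def IsMatching (M : Finset (V × W)) : Prop :=
  ∀ e ∈ M, ∀ f ∈ M, e ≠ f → e.1 ≠ f.1 ∧ e.2 ≠ f.2

def Covers (M : Finset (V × W)) (S : Finset V) : Prop :=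
  ∀ s ∈ S, ∃ e ∈ M, e.1 = s

/-- `M` is a simultaneous matching: `M ∩ (S × B)` is a matching covering `S` and
`M ∩ (T × B)` is a matching covering `T`. -/
def SimMatching (E M : Finset (V × W)) (S T : Finset V) : Prop :=
  M ⊆ E ∧
  IsMatching (M.filter (fun e => e.1 ∈ S)) ∧ Covers (M.filter (fun e => e.1 ∈ S)) S ∧
  IsMatching (M.filter (fun e => e.1 ∈ T)) ∧ Covers (M.filter (fun e => e.1 ∈ T)) T

theorem mem_nbhd {E : Finset (V × W)} {P : Finset V} {b : W} :
    b ∈ nbhd E P ↔ ∃ a ∈ P, (a, b) ∈ E := by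
  simp only [nbhd, mem_image, mem_filter, Prod.exists]
  constructor
  · rintro ⟨a, b, ⟨hab, ha⟩, rfl⟩
    exact ⟨a, ha, hab⟩
  · rintro ⟨a, ha, hab⟩
    exact ⟨a, b, ⟨hab, ha⟩, rfl⟩

theorem nbhd_mono {E E' : Finset (V × W)} (h : E ⊆ E') (P : Finset V) :
    nbhd E P ⊆ nbhd E' P := fun _ hb => by
  obtain ⟨a, ha, hab⟩ := mem_nbhd.1 hb
  exact mem_nbhd.2 ⟨a, ha, h hab⟩

theorem nbhd_union (E : Finset (V × W)) (P Q : Finset V) :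
    nbhd E (P ∪ Q) = nbhd E P ∪ nbhd E Q := by
  ext b
  simp only [mem_union, mem_nbhd, or_and_right, exists_or]

theorem nbhd_filter_fst_mem {M : Finset (V × W)} {P X : Finset V} (hPX : P ⊆ X) :
    nbhd (M.filter (fun e => e.1 ∈ X)) P = nbhd M P := by
  ext b
  simp only [mem_nbhd, mem_filter]
  exact exists_congr fun a => ⟨fun ⟨ha, hab, _⟩ => ⟨ha, hab⟩, fun ⟨ha, hab⟩ => ⟨ha, hab, hPX ha⟩⟩

theorem Covers.mono {α β : Type*} {M : Finset (α × β)} {P X : Finset α} (hX : Covers M X) (hPX : P ⊆ X) :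
    Covers M P :=
  fun p hp => hX p (hPX hp)

namespace IsMatching

theorem injOn_fst {α β : Type*} {M : Finset (α × β)} (hM : IsMatching M) :
    Set.InjOn Prod.fst (M : Set (α × β)) :=
  fun e he f hf h => by_contra fun hne => (hM e he f hf hne).1 h

theorem injOn_snd {α β : Type*} {M : Finset (α × β)} (hM : IsMatching M) :
    Set.InjOn Prod.snd (M : Set (α × β)) :=
  fun e he f hf h => by_contra fun hne => (hM e he f hf hne).2 h

theorem card_nbhd {M : Finset (V × W)} {P : Finset V} (hM : IsMatching M) (hP : Covers M P) :
    #(nbhd M P) = #P := by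
  set MP := M.filter (fun e => e.1 ∈ P)
  have hfst : MP.image Prod.fst = P := by
    refine Subset.antisymm (fun a ha => ?_) fun p hp => ?_
    · obtain ⟨e, he, rfl⟩ := mem_image.1 ha
      exact (mem_filter.1 he).2
    · obtain ⟨e, he, rfl⟩ := hP p hp
      exact mem_image_of_mem _ (mem_filter.2 ⟨he, hp⟩)
  calc #(nbhd M P) = #MP := card_image_of_injOn (hM.injOn_snd.mono (filter_subset _ _))
    _ = #P := by rw [← hfst, card_image_of_injOn (hM.injOn_fst.mono (filter_subset _ _))]

end IsMatching

namespace SimMatching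

variable {E M : Finset (V × W)} {S T P : Finset V}

theorem card_nbhd_inter_sdiff (hM : SimMatching E M S T) (hP : P ⊆ S ∪ T) :
    #(nbhd M (P ∩ S)) = #(P ∩ S) ∧ #(nbhd M (P \ S)) = #(P \ S) := by
  obtain ⟨-, hMS, hCS, hMT, hCT⟩ := hM
  have hPT : P \ S ⊆ T := fun a ha => by
    rw [mem_sdiff] at ha
    exact (mem_union.1 (hP ha.1)).resolve_left ha.2
  constructor
  · rw [← nbhd_filter_fst_mem inter_subset_right]
    exact hMS.card_nbhd (hCS.mono inter_subset_right)
  · rw [← nbhd_filter_fst_mem hPT]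
    exact hMT.card_nbhd (hCT.mono hPT)

theorem nbhd_inter_nbhd_sdiff_subset (hM : SimMatching E M S T) (hP : P ⊆ S ∪ T) :
    nbhd M (P ∩ S) ∩ nbhd M (P \ S) ⊆
      nbhd E (P ∩ (S \ T)) ∩ nbhd E (P ∩ (T \ S)) := by
  obtain ⟨hME, -, -, hMT, -⟩ := hM
  intro b hb
  obtain ⟨⟨a, ha, hab⟩, ⟨c, hc, hcb⟩⟩ := And.imp mem_nbhd.1 mem_nbhd.1 (mem_inter.1 hb)
  obtain ⟨haP, haS⟩ := mem_inter.1 ha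
  obtain ⟨hcP, hcS⟩ := mem_sdiff.1 hc
  have hcT : c ∈ T := (mem_union.1 (hP hcP)).resolve_left hcS
  have haT : a ∉ T := fun haT => hcS <| by
    have hac : (a, b) = (c, b) :=
      hMT.injOn_snd (mem_filter.2 ⟨hab, haT⟩) (mem_filter.2 ⟨hcb, hcT⟩) rfl
    exact (Prod.mk_inj.1 hac).1 ▸ haS
  exact mem_inter.2 ⟨mem_nbhd.2 ⟨a, mem_inter.2 ⟨haP, mem_sdiff.2 ⟨haS, haT⟩⟩, hME hab⟩,
    mem_nbhd.2 ⟨c, mem_inter.2 ⟨hcP, mem_sdiff.2 ⟨hcT, hcS⟩⟩, hME hcb⟩⟩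

theorem nbhd_eq_of_hall (hM : SimMatching E M S T) (hP : P ⊆ S ∪ T)
    (hHall : #(nbhd E P) + #(nbhd E (P ∩ (S \ T)) ∩ nbhd E (P ∩ (T \ S))) = #P) :
    nbhd M P = nbhd E P := by
  obtain ⟨hcardS, hcardT⟩ := hM.card_nbhd_inter_sdiff hP
  have hsplit : #P = #(nbhd M P) + #(nbhd M (P ∩ S) ∩ nbhd M (P \ S)) := by
    rw [← card_inter_add_card_sdiff P S, ← hcardS, ← hcardT, ← card_union_add_card_inter,
      ← nbhd_union, union_comm, sdiff_union_inter]
  have hinter := card_le_card (hM.nbhd_inter_nbhd_sdiff_subset hP)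
  exact eq_of_subset_of_card_le (nbhd_mono hM.1 P) (by omega)

end SimMatching

theorem rule2b_sound_general (S T : Finset V) (E : Finset (V × W))
    (P : Finset V) (hP : P ⊆ S ∪ T)
    (hHall : (nbhd E P).card +
      (nbhd E (P ∩ (S \ T)) ∩ nbhd E (P ∩ (T \ S))).card = P.card)
    (u : V) (v : W)
    (hu : u ∈ S \ (T ∪ P)) (hv : v ∈ nbhd E P \ nbhd E (P ∩ (T \ S))) :
    ∀ M, SimMatching E M S T → (u, v) ∉ M := by
  intro M hM huvM
  obtain ⟨hvP, hvT⟩ := mem_sdiff.1 hv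
  obtain ⟨huS, huTP⟩ := mem_sdiff.1 hu
  obtain ⟨p, hpP, hpv⟩ := mem_nbhd.1 ((hM.nbhd_eq_of_hall hP hHall).symm ▸ hvP)
  have hpS : p ∉ S := fun hpS => by
    have hpu : (p, v) = (u, v) :=
      hM.2.1.injOn_snd (mem_filter.2 ⟨hpv, hpS⟩) (mem_filter.2 ⟨huvM, huS⟩) rfl
    exact huTP (mem_union_right _ ((Prod.mk_inj.1 hpu).1 ▸ hpP))
  have hpT : p ∈ T := (mem_union.1 (hP hpP)).resolve_left hpS
  exact hvT (mem_nbhd.2 ⟨p, mem_inter.2 ⟨hpP, mem_sdiff.2 ⟨hpT, hpS⟩⟩, hM.1 hpv⟩)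

/-- Rule 2b: if `P` is a simultaneous Hall set, no edge `(u,v)` with
`u ∈ S \ (T ∪ P)` and `v ∈ N(P) \ N(P^T)` can belong to a simultaneous matching. -/
theorem rule2b_sound (B : Finset W) (S T : Finset V) (E : Finset (V × W))
    (hE : E ⊆ (S ∪ T) ×ˢ B) (hST : (S ∩ T).Nonempty)
    (P : Finset V) (hP : P ⊆ S ∪ T)
    (hHall : (nbhd E P).card +
      (nbhd E (P ∩ (S \ T)) ∩ nbhd E (P ∩ (T \ S))).card = P.card)
    (u : V) (v : W) (huv : (u, v) ∈ E)
    (hu : u ∈ S \ (T ∪ P)) (hv : v ∈ nbhd E P \ nbhd E (P ∩ (T \ S))) :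
    ∀ M, SimMatching E M S T → (u, v) ∉ M :=
  rule2b_sound_general S T E P hP hHall u v hu hv
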